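/- (Dirac mass rigidity) Let F̄ ∈ ℝ^{3×2} have distinct singular values λ_M(F̄) > λ_m(F̄) ≥ 0, and let ν be a (compactly supported, for definiteness) probability measure on ℝ^{3×2} with barycenter ∫ G dν(G) = F̄ and such that ν-almost every G has the same singular values as F̄: λ_M(G) = λ_M(F̄) and λ_m(G) = λ_m(F̄). Then ν is the Dirac mass at F̄. -/

import Mathlib

/-!
The squared Frobenius norm of `G` is `trace (Gᵀ G) = λ_M² + λ_m²`, a function of the singular
values alone. Hence `ν` is carried by a Euclidean sphere on which its barycenter `F̄` also lies,
and strict convexity of the Euclidean ball forces `ν` to be concentrated at `F̄`.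
-/

open Matrix MeasureTheory

def svdD (a b : ℝ) : Matrix (Fin 3) (Fin 2) ℝ := fun i j =>
  if i = 0 ∧ j = 0 then a else if i = 1 ∧ j = 1 then b else 0

def HasSingularValues (F : Matrix (Fin 3) (Fin 2) ℝ) (a b : ℝ) : Prop :=
  a ≥ b ∧ b ≥ 0 ∧ ∃ (Q : Matrix (Fin 3) (Fin 3) ℝ) (R : Matrix (Fin 2) (Fin 2) ℝ),
    Q * Qᵀ = 1 ∧ Q.det = 1 ∧ R * Rᵀ = 1 ∧ F = Q * svdD a b * R

namespace MeasureTheory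

variable {α : Type*} [MeasurableSpace α] {μ : Measure α} [IsProbabilityMeasure μ]

theorem ae_eq_integral_of_norm_le_norm_integral {E : Type*} [NormedAddCommGroup E]
    [NormedSpace ℝ E] [CompleteSpace E] [StrictConvexSpace ℝ E] {f : α → E}
    (h_le : ∀ᵐ x ∂μ, ‖f x‖ ≤ ‖∫ x, f x ∂μ‖) : ∀ᵐ x ∂μ, f x = ∫ x, f x ∂μ := by
  rcases ae_eq_const_or_norm_integral_lt_of_norm_le_const h_le with h | h
  · rwa [average_eq_integral] at h
  · simp at h

theorem Measure.eq_dirac_of_ae_eq {a : α} (h : ∀ᵐ x ∂μ, x = a) : μ = Measure.dirac a :=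
  calc μ = μ.map id := Measure.map_id.symm
    _ = μ.map (fun _ ↦ a) := Measure.map_congr h
    _ = Measure.dirac a := by simp [Measure.map_const]

end MeasureTheory

theorem Matrix.trace_transpose_mul_self {m n R : Type*} [Fintype m] [Fintype n] [CommSemiring R]
    (A : Matrix m n R) : (Aᵀ * A).trace = ∑ i, ∑ j, A i j ^ 2 := by
  simp only [trace, diag, mul_apply, transpose_apply, sq]
  exact Finset.sum_comm

theorem HasSingularValues.sum_sq_entries {G : Matrix (Fin 3) (Fin 2) ℝ} {a b : ℝ}
    (h : HasSingularValues G a b) : ∑ i, ∑ j, G i j ^ 2 = a ^ 2 + b ^ 2 := by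
  obtain ⟨-, -, Q, R, hQ, -, hR, rfl⟩ := h
  rw [← trace_transpose_mul_self]
  calc ((Q * svdD a b * R)ᵀ * (Q * svdD a b * R)).trace
      = (Rᵀ * ((svdD a b)ᵀ * (Qᵀ * Q) * svdD a b * R)).trace := by
        simp only [transpose_mul, Matrix.mul_assoc]
    _ = ((svdD a b)ᵀ * svdD a b * (R * Rᵀ)).trace := by
        rw [trace_mul_comm, mul_eq_one_comm.mp hQ, Matrix.mul_one, Matrix.mul_assoc]
    _ = a ^ 2 + b ^ 2 := by
        rw [hR, Matrix.mul_one]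
        simp [trace, mul_apply, svdD, Fin.sum_univ_succ, sq]

-- The sup norm of `m → n → ℝ` is not strictly convex; the Frobenius norm is.
noncomputable def rowsEuclideanEquiv (m n : Type*) [Fintype m] [Fintype n] :
    (m → n → ℝ) ≃L[ℝ] PiLp 2 (fun _ : m ↦ EuclideanSpace ℝ n) :=
  (ContinuousLinearEquiv.piCongrRight fun _ ↦ (EuclideanSpace.equiv n ℝ).symm).trans
    (PiLp.continuousLinearEquiv 2 ℝ _).symm

theorem norm_rowsEuclideanEquiv_sq {m n : Type*} [Fintype m] [Fintype n] (G : m → n → ℝ) :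
    ‖rowsEuclideanEquiv m n G‖ ^ 2 = ∑ i, ∑ j, G i j ^ 2 := by
  simp [rowsEuclideanEquiv, PiLp.norm_sq_eq_of_L2]

theorem stmt_17_general (Fb : Matrix (Fin 3) (Fin 2) ℝ) (lM lm : ℝ)
    (hsv : HasSingularValues Fb lM lm)
    (ν : Measure (Fin 3 → Fin 2 → ℝ)) [IsProbabilityMeasure ν]
    (hbar : (∫ G, G ∂ν) = fun i j => Fb i j)
    (hsing : ∀ᵐ G ∂ν, HasSingularValues (Matrix.of G) lM lm) :
    ν = Measure.dirac (fun i j => Fb i j) := by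
  set T := rowsEuclideanEquiv (Fin 3) (Fin 2)
  have hmean : ∫ G, T G ∂ν = T (fun i j => Fb i j) := by rw [T.integral_comp_comm, hbar]
  have hsphere : ∀ᵐ G ∂ν, ‖T G‖ ≤ ‖∫ G, T G ∂ν‖ := by
    filter_upwards [hsing] with G hG
    rw [hmean, ← sq_le_sq₀ (norm_nonneg _) (norm_nonneg _), norm_rowsEuclideanEquiv_sq,
      norm_rowsEuclideanEquiv_sq]
    exact (hG.sum_sq_entries.trans hsv.sum_sq_entries.symm).le
  refine Measure.eq_dirac_of_ae_eq ?_
  filter_upwards [ae_eq_integral_of_norm_le_norm_integral hsphere] with G hG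
  exact T.injective (hG.trans hmean)

theorem stmt_17 (Fb : Matrix (Fin 3) (Fin 2) ℝ) (lM lm : ℝ)
    (hsv : HasSingularValues Fb lM lm) (hlt : lm < lM)
    (ν : Measure (Fin 3 → Fin 2 → ℝ)) [IsProbabilityMeasure ν]
    (hcpt : ∃ K : Set (Fin 3 → Fin 2 → ℝ), IsCompact K ∧ ν Kᶜ = 0)
    (hbar : (∫ G, G ∂ν) = fun i j => Fb i j)
    (hsing : ∀ᵐ G ∂ν, HasSingularValues (Matrix.of G) lM lm) :
    ν = Measure.dirac (fun i j => Fb i j) :=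
  stmt_17_general Fb lM lm hsv ν hbar hsing
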